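/- For every finite metric voting instance (D, p, p) in general position in which the candidate distribution equals the voter distribution, the expected distortion satisfies Social(D, p, p) ≤ 2 − 1/652. -/

import Mathlib

open Finset

/-- A finite metric space on `n` points. -/
structure FinMetric (n : ℕ) where
  d : Fin n → Fin n → ℝ
  refl : ∀ i, d i i = 0
  symm : ∀ i j, d i j = d j i
  pos : ∀ i j, i ≠ j → 0 < d i j
  triangle : ∀ i j k, d i k ≤ d i j + d j k

/-- Social cost of candidate `i`: average distance to the voters,
distributed according to `q`. -/
noncomputable def mcost {n : ℕ} (M : FinMetric n) (q : Fin n → ℝ) (i : Fin n) : ℝ :=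
  ∑ j, q j * M.d i j

/-- Total voter mass strictly preferring candidate `i` over candidate `i'`. -/
noncomputable def mvotes {n : ℕ} (M : FinMetric n) (q : Fin n → ℝ) (i i' : Fin n) : ℝ :=
  ∑ j ∈ Finset.univ.filter (fun j => M.d i j < M.d i' j), q j

/-- The majority winner of the election between candidates `i` and `i'`. -/
noncomputable def mwin {n : ℕ} (M : FinMetric n) (q : Fin n → ℝ) (i i' : Fin n) : Fin n :=
  if 1/2 < mvotes M q i i' then i else i'

/-- The socially better of the two candidates `i`, `i'`. -/
noncomputable def mopt {n : ℕ} (M : FinMetric n) (q : Fin n → ℝ) (i i' : Fin n) : Fin n :=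
  if mcost M q i < mcost M q i' then i else i'

/-- Pairwise distortion of the election between `i` and `i'`. -/
noncomputable def mr {n : ℕ} (M : FinMetric n) (q : Fin n → ℝ) (i i' : Fin n) : ℝ :=
  mcost M q (mwin M q i i') / mcost M q (mopt M q i i')

/-- Expected distortion: two candidates drawn i.i.d. from `p`, voters distributed as `q`. -/
noncomputable def msocial {n : ℕ} (M : FinMetric n) (p q : Fin n → ℝ) : ℝ :=
  ∑ i, ∑ i', p i * p i' * mr M q i i'

/-- General position: no voter is equidistant from two distinct candidates, every
election has a strict majority winner, and there are no ties in social cost. -/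
def MGenPos {n : ℕ} (M : FinMetric n) (q : Fin n → ℝ) : Prop :=
  (∀ j i i' : Fin n, i ≠ i' → M.d i j ≠ M.d i' j) ∧
  (∀ i i' : Fin n, i ≠ i' → mvotes M q i i' ≠ 1/2) ∧
  (∀ i i' : Fin n, i ≠ i' → mcost M q i ≠ mcost M q i')

section MVHelp

open scoped Classical

variable {n : ℕ}

lemma mv_d_nonneg (M : FinMetric n) (i j : Fin n) : 0 ≤ M.d i j := by
  rcases eq_or_ne i j with h | h
  · simp [h, M.refl]
  · exact (M.pos i j h).le

lemma mv_mcost_nonneg (M : FinMetric n) {p : Fin n → ℝ} (hp : ∀ i, 0 ≤ p i) (i : Fin n) :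
    0 ≤ mcost M p i :=
  Finset.sum_nonneg fun j _ => mul_nonneg (hp j) (mv_d_nonneg M i j)

lemma mv_mcost_pos (M : FinMetric n) {p : Fin n → ℝ} (hp : ∀ i, 0 ≤ p i)
    {k l : Fin n} (hkl : k ≠ l) (hk : 0 < p k) (hl : 0 < p l) (i : Fin n) :
    0 < mcost M p i := by
  have key : ∀ w : Fin n, w ≠ i → 0 < p w → 0 < mcost M p i := by
    intro w hw hpw
    have h1 : 0 < p w * M.d i w := mul_pos hpw (M.pos i w (Ne.symm hw))
    have h2 : ∀ j ∈ Finset.univ, (0:ℝ) ≤ p j * M.d i j :=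
      fun j _ => mul_nonneg (hp j) (mv_d_nonneg M i j)
    have := Finset.single_le_sum h2 (Finset.mem_univ w)
    calc (0:ℝ) < p w * M.d i w := h1
      _ ≤ mcost M p i := this
  rcases eq_or_ne k i with rfl | hk'
  · exact key l (fun h => hkl h.symm) hl
  · exact key k hk' hk

/-- Pair `{i,j}` is "bad with loser `i`": `j` wins the majority election but `i` is cheaper. -/
def MVBad (M : FinMetric n) (p : Fin n → ℝ) (i j : Fin n) : Prop :=
  1/2 < mvotes M p j i ∧ mcost M p i < mcost M p j

lemma mv_votes_sum (M : FinMetric n) (p : Fin n → ℝ) (hpsum : ∑ i, p i = 1)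
    (hgd : ∀ j i i' : Fin n, i ≠ i' → M.d i j ≠ M.d i' j) {i j : Fin n} (hij : i ≠ j) :
    mvotes M p i j + mvotes M p j i = 1 := by
  have hfilter : Finset.univ.filter (fun w => M.d j w < M.d i w)
      = Finset.univ.filter (fun w => ¬ (M.d i w < M.d j w)) := by
    apply Finset.filter_congr
    intro w _
    constructor
    · intro h; simp only [not_lt]; exact h.le
    · intro h
      exact lt_of_le_of_ne (not_lt.mp (by simpa using h)) (hgd w j i (Ne.symm hij))
  simp only [mvotes]
  rw [hfilter, Finset.sum_filter_add_sum_filter_not]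
  exact hpsum

/-- The loser of a majority election is not too far below the winner in cost:
`2 (c j − c i) ≤ d i j` whenever `j` has a strict majority over `i`. -/
lemma mv_diff_le (M : FinMetric n) (p : Fin n → ℝ) (hp : ∀ i, 0 ≤ p i)
    (hpsum : ∑ i, p i = 1) {i j : Fin n} (hw : 1/2 < mvotes M p j i) :
    2 * (mcost M p j - mcost M p i) ≤ M.d i j := by
  have hd := mv_d_nonneg M i j
  have h1 : mcost M p j - mcost M p i = ∑ w, p w * (M.d j w - M.d i w) := by
    simp only [mcost, ← Finset.sum_sub_distrib]
    exact Finset.sum_congr rfl fun w _ => by ring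
  have h2 : ∑ w, p w * (M.d j w - M.d i w)
      ≤ ∑ w, (if M.d j w < M.d i w then 0 else p w * M.d i j) := by
    apply Finset.sum_le_sum
    intro w _
    split
    · next h => exact mul_nonpos_of_nonneg_of_nonpos (hp w) (by linarith)
    · next h =>
      have ht := M.triangle j i w
      have hs : M.d j i = M.d i j := M.symm j i
      have : M.d j w - M.d i w ≤ M.d i j := by linarith
      exact mul_le_mul_of_nonneg_left this (hp w)
  have h3 : ∑ w, (if M.d j w < M.d i w then 0 else p w * M.d i j)
      = (1 - mvotes M p j i) * M.d i j := by
    rw [Finset.sum_ite]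
    have hsplit := Finset.sum_filter_add_sum_filter_not Finset.univ
      (fun w => M.d j w < M.d i w) p
    rw [hpsum] at hsplit
    have hv : mvotes M p j i = ∑ w ∈ Finset.univ.filter (fun w => M.d j w < M.d i w), p w := rfl
    rw [Finset.sum_const_zero, zero_add, ← Finset.sum_mul]
    rw [← hv] at hsplit
    have : ∑ w ∈ Finset.univ.filter (fun w => ¬ M.d j w < M.d i w), p w
        = 1 - mvotes M p j i := by linarith
    rw [this]
  rw [h1] at *
  nlinarith [h2, h3, hd, hw]

/-- If `j` has a strict majority over `i` then `d i j ≤ 4 c i`. -/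
lemma mv_d_le (M : FinMetric n) (p : Fin n → ℝ) (hp : ∀ i, 0 ≤ p i)
    {i j : Fin n} (hw : 1/2 < mvotes M p j i) :
    M.d i j ≤ 4 * mcost M p i := by
  have hd := mv_d_nonneg M i j
  have h1 : ∑ w ∈ Finset.univ.filter (fun w => M.d j w < M.d i w), p w * (M.d i j / 2)
      ≤ ∑ w ∈ Finset.univ.filter (fun w => M.d j w < M.d i w), p w * M.d i w := by
    apply Finset.sum_le_sum
    intro w hwmem
    have hcond : M.d j w < M.d i w := (Finset.mem_filter.mp hwmem).2
    have ht := M.triangle i w j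
    have hs : M.d w j = M.d j w := M.symm w j
    have : M.d i j / 2 ≤ M.d i w := by linarith
    exact mul_le_mul_of_nonneg_left this (hp w)
  have h2 : ∑ w ∈ Finset.univ.filter (fun w => M.d j w < M.d i w), p w * M.d i w
      ≤ mcost M p i := by
    apply Finset.sum_le_sum_of_subset_of_nonneg (Finset.filter_subset _ _)
    intro w _ _
    exact mul_nonneg (hp w) (mv_d_nonneg M i w)
  have h3 : ∑ w ∈ Finset.univ.filter (fun w => M.d j w < M.d i w), p w * (M.d i j / 2)
      = mvotes M p j i * (M.d i j / 2) := by
    rw [← Finset.sum_mul]; rfl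
  nlinarith [h1, h2, h3, hd, hw]

lemma mv_cost3 (M : FinMetric n) (p : Fin n → ℝ) (hp : ∀ i, 0 ≤ p i)
    (hpsum : ∑ i, p i = 1) {i j : Fin n} (hb : MVBad M p i j) :
    mcost M p j ≤ 3 * mcost M p i := by
  have h1 := mv_diff_le M p hp hpsum hb.1
  have h2 := mv_d_le M p hp hb.1
  linarith

lemma mv_bad_not_both {M : FinMetric n} {p : Fin n → ℝ} {i j : Fin n}
    (h1 : MVBad M p i j) (h2 : MVBad M p j i) : False :=
  lt_asymm h1.2 h2.2

/-- Capacity bound at a single candidate `j`. -/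
lemma mv_capacity (M : FinMetric n) (p : Fin n → ℝ) (hp : ∀ i, 0 ≤ p i)
    (hpsum : ∑ i, p i = 1) (j : Fin n) :
    ∑ i, p i * ((if MVBad M p i j then M.d j i else 0)
      + (if MVBad M p j i then 2 * (mcost M p i - mcost M p j) else 0))
      ≤ mcost M p j := by
  have key : ∀ i : Fin n, p i * ((if MVBad M p i j then M.d j i else 0)
      + (if MVBad M p j i then 2 * (mcost M p i - mcost M p j) else 0)) ≤ p i * M.d j i := by
    intro i
    apply mul_le_mul_of_nonneg_left _ (hp i)
    by_cases h1 : MVBad M p i j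
    · rw [if_pos h1, if_neg (fun h2 => mv_bad_not_both h1 h2), add_zero]
    · rw [if_neg h1]
      by_cases h2 : MVBad M p j i
      · rw [if_pos h2, zero_add]
        have := mv_diff_le M p hp hpsum (i := j) (j := i) h2.1
        linarith
      · rw [if_neg h2, add_zero]
        exact mv_d_nonneg M j i
  calc ∑ i, p i * ((if MVBad M p i j then M.d j i else 0)
      + (if MVBad M p j i then 2 * (mcost M p i - mcost M p j) else 0))
      ≤ ∑ i, p i * M.d j i := Finset.sum_le_sum (fun i _ => key i)
    _ = mcost M p j := rfl

/-- Aggregate bad-pair cost gap at loser `i`. -/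
noncomputable def mvA (M : FinMetric n) (p : Fin n → ℝ) (i : Fin n) : ℝ :=
  ∑ j, p j * (if MVBad M p i j then mcost M p j - mcost M p i else 0)

lemma mvA_nonneg (M : FinMetric n) (p : Fin n → ℝ) (hp : ∀ i, 0 ≤ p i) (i : Fin n) :
    0 ≤ mvA M p i := by
  apply Finset.sum_nonneg
  intro j _
  apply mul_nonneg (hp j)
  split
  · next h => linarith [h.2]
  · exact le_rfl

/-- The key double-counted quantity. -/
noncomputable def mvT (M : FinMetric n) (p : Fin n → ℝ) : ℝ :=
  ∑ j, ∑ i, p j * (p i * (if MVBad M p i j then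
    M.d j i * (mcost M p j - mcost M p i) / (mcost M p j) ^ 2 else 0))

/-- Pairwise distortion bound in terms of bad-pair gaps. -/
lemma mv_mr_le (M : FinMetric n) (p : Fin n → ℝ) (hpsum : ∑ i, p i = 1)
    (hgen : MGenPos M p) (hpos : ∀ i, 0 < mcost M p i) (i j : Fin n) :
    mr M p i j ≤ 1 + ((if MVBad M p i j then (mcost M p j - mcost M p i) / mcost M p i else 0)
      + (if MVBad M p j i then (mcost M p i - mcost M p j) / mcost M p j else 0)) := by
  rcases eq_or_ne i j with rfl | hij
  · have hb : ¬ MVBad M p i i := fun h => lt_irrefl _ h.2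
    rw [if_neg hb]
    simp only [mr, mwin, mopt, ite_self]
    rw [div_self (hpos i).ne']
    norm_num
  · have hvne := hgen.2.1 i j hij
    have hcne := hgen.2.2 i j hij
    have hsum := mv_votes_sum M p hpsum hgen.1 hij
    rcases lt_or_gt_of_ne hvne with hv | hv
    · -- votes for i below 1/2 : j wins
      have hwin : mwin M p i j = j := by
        simp only [mwin]; exact if_neg (not_lt.mpr hv.le)
      have hw : 1/2 < mvotes M p j i := by linarith
      rcases lt_or_gt_of_ne hcne with hc | hc
      · -- c i < c j : bad pair, loser i
        have hb : MVBad M p i j := ⟨hw, hc⟩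
        have hb' : ¬ MVBad M p j i := fun h => lt_asymm hc h.2
        have hopt : mopt M p i j = i := by
          simp only [mopt]; exact if_pos hc
        simp only [mr, hwin, hopt, if_pos hb, if_neg hb']
        have hci := (hpos i).ne'
        have : mcost M p j / mcost M p i
            = 1 + ((mcost M p j - mcost M p i) / mcost M p i + 0) := by
          field_simp
          ring
        exact le_of_eq this
      · -- c j < c i : winner is optimal
        have hopt : mopt M p i j = j := by
          simp only [mopt]; exact if_neg (not_lt.mpr hc.le)
        have hb : ¬ MVBad M p i j := fun h => lt_asymm hc h.2
        have hb' : ¬ MVBad M p j i := fun h => lt_asymm hv h.1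
        simp only [mr, hwin, hopt, if_neg hb, if_neg hb']
        rw [div_self (hpos j).ne']
        norm_num
    · -- i wins
      have hwin : mwin M p i j = i := by
        simp only [mwin]; exact if_pos hv
      rcases lt_or_gt_of_ne hcne with hc | hc
      · -- c i < c j : winner optimal
        have hopt : mopt M p i j = i := by
          simp only [mopt]; exact if_pos hc
        have hb : ¬ MVBad M p i j := fun h => by
          have : mvotes M p j i < 1/2 := by linarith
          exact lt_asymm this h.1
        have hb' : ¬ MVBad M p j i := fun h => lt_asymm hc h.2
        simp only [mr, hwin, hopt, if_neg hb, if_neg hb']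
        rw [div_self (hpos i).ne']
        norm_num
      · -- c j < c i : bad pair, loser j
        have hb : ¬ MVBad M p i j := fun h => lt_asymm hc h.2
        have hb' : MVBad M p j i := ⟨hv, hc⟩
        have hopt : mopt M p i j = j := by
          simp only [mopt]; exact if_neg (not_lt.mpr hc.le)
        simp only [mr, hwin, hopt, if_neg hb, if_pos hb']
        have hcj := (hpos j).ne'
        have : mcost M p i / mcost M p j
            = 1 + (0 + (mcost M p i - mcost M p j) / mcost M p j) := by
          field_simp
          ring
        exact le_of_eq this

lemma mv_social_le (M : FinMetric n) (p : Fin n → ℝ) (hp : ∀ i, 0 ≤ p i)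
    (hpsum : ∑ i, p i = 1) (hgen : MGenPos M p) (hpos : ∀ i, 0 < mcost M p i) :
    msocial M p p ≤ 1 + 2 * ∑ i, p i * (mvA M p i / mcost M p i) := by
  have step1 : msocial M p p ≤ ∑ i, ∑ j, (p i * p j
      + (p i * p j * (if MVBad M p i j then (mcost M p j - mcost M p i) / mcost M p i else 0)
      + p i * p j * (if MVBad M p j i then (mcost M p i - mcost M p j) / mcost M p j else 0))) := by
    apply Finset.sum_le_sum; intro i _
    apply Finset.sum_le_sum; intro j _
    have h := mul_le_mul_of_nonneg_left (mv_mr_le M p hpsum hgen hpos i j)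
      (mul_nonneg (hp i) (hp j))
    calc p i * p j * mr M p i j
        ≤ p i * p j * (1 + ((if MVBad M p i j then (mcost M p j - mcost M p i) / mcost M p i else 0)
          + (if MVBad M p j i then (mcost M p i - mcost M p j) / mcost M p j else 0))) := h
      _ = p i * p j
          + (p i * p j * (if MVBad M p i j then (mcost M p j - mcost M p i) / mcost M p i else 0)
          + p i * p j * (if MVBad M p j i then (mcost M p i - mcost M p j) / mcost M p j else 0)) := by
          ring
  have inner_eq : ∀ i : Fin n,
      (∑ j, p j * (if MVBad M p i j then (mcost M p j - mcost M p i) / mcost M p i else 0))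
        = mvA M p i / mcost M p i := by
    intro i
    simp only [mvA]
    rw [Finset.sum_div]
    apply Finset.sum_congr rfl
    intro j _
    split
    · next h => rw [mul_div_assoc]
    · next h => simp
  have h1 : (∑ i, ∑ j, p i * p j) = 1 := by
    have : ∀ i : Fin n, (∑ j, p i * p j) = p i := by
      intro i; rw [← Finset.mul_sum, hpsum, mul_one]
    rw [Finset.sum_congr rfl fun i _ => this i, hpsum]
  have h2 : (∑ i, ∑ j, p i * p j * (if MVBad M p i j then (mcost M p j - mcost M p i) / mcost M p i else 0))
      = ∑ i, p i * (mvA M p i / mcost M p i) := by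
    apply Finset.sum_congr rfl
    intro i _
    calc (∑ j, p i * p j * (if MVBad M p i j then (mcost M p j - mcost M p i) / mcost M p i else 0))
        = p i * ∑ j, p j * (if MVBad M p i j then (mcost M p j - mcost M p i) / mcost M p i else 0) := by
          rw [Finset.mul_sum]
          exact Finset.sum_congr rfl fun j _ => by ring
      _ = p i * (mvA M p i / mcost M p i) := by rw [inner_eq i]
  have h3 : (∑ i, ∑ j, p i * p j * (if MVBad M p j i then (mcost M p i - mcost M p j) / mcost M p j else 0))
      = ∑ i, ∑ j, p i * p j * (if MVBad M p i j then (mcost M p j - mcost M p i) / mcost M p i else 0) := by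
    rw [Finset.sum_comm]
    exact Finset.sum_congr rfl fun i _ => Finset.sum_congr rfl fun j _ => by ring
  have exp : (∑ i, ∑ j, (p i * p j
      + (p i * p j * (if MVBad M p i j then (mcost M p j - mcost M p i) / mcost M p i else 0)
      + p i * p j * (if MVBad M p j i then (mcost M p i - mcost M p j) / mcost M p j else 0))))
      = 1 + 2 * ∑ i, p i * (mvA M p i / mcost M p i) := by
    simp only [Finset.sum_add_distrib]
    rw [h1, h2, h3, h2]
    ring
  calc msocial M p p ≤ _ := step1
    _ = 1 + 2 * ∑ i, p i * (mvA M p i / mcost M p i) := exp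

lemma mv_T_le (M : FinMetric n) (p : Fin n → ℝ) (hp : ∀ i, 0 ≤ p i)
    (hpsum : ∑ i, p i = 1) (hpos : ∀ i, 0 < mcost M p i) :
    mvT M p ≤ 1 - 2 * ∑ j, p j * (mvA M p j / mcost M p j) := by
  have inner_le : ∀ j : Fin n,
      (∑ i, p i * (if MVBad M p i j then
        M.d j i * (mcost M p j - mcost M p i) / (mcost M p j) ^ 2 else 0))
      ≤ 1 - 2 * (mvA M p j / mcost M p j) := by
    intro j
    have hcj := hpos j
    have pstep : ∀ i : Fin n, p i * (if MVBad M p i j then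
        M.d j i * (mcost M p j - mcost M p i) / (mcost M p j) ^ 2 else 0)
        ≤ (p i * (if MVBad M p i j then M.d j i else 0)) / mcost M p j := by
      intro i
      by_cases h : MVBad M p i j
      · rw [if_pos h, if_pos h]
        have hdnn := mv_d_nonneg M j i
        have hcinn := mv_mcost_nonneg M hp i
        have key : M.d j i * (mcost M p j - mcost M p i) / (mcost M p j) ^ 2
            ≤ M.d j i / mcost M p j := by
          rw [div_le_div_iff₀ (by positivity) hcj]
          nlinarith [mul_nonneg (mul_nonneg hdnn hcj.le) hcinn]
        calc p i * (M.d j i * (mcost M p j - mcost M p i) / (mcost M p j) ^ 2)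
            ≤ p i * (M.d j i / mcost M p j) := mul_le_mul_of_nonneg_left key (hp i)
          _ = p i * M.d j i / mcost M p j := by ring
      · rw [if_neg h, if_neg h]
        simp
    have hnum : (∑ i, p i * (if MVBad M p i j then M.d j i else 0))
        ≤ mcost M p j - 2 * mvA M p j := by
      have hcap := mv_capacity M p hp hpsum j
      have hsplit : (∑ i, p i * ((if MVBad M p i j then M.d j i else 0)
          + (if MVBad M p j i then 2 * (mcost M p i - mcost M p j) else 0)))
          = (∑ i, p i * (if MVBad M p i j then M.d j i else 0))
          + ∑ i, p i * (if MVBad M p j i then 2 * (mcost M p i - mcost M p j) else 0) := by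
        simp only [mul_add, Finset.sum_add_distrib]
      have h2A : (∑ i, p i * (if MVBad M p j i then 2 * (mcost M p i - mcost M p j) else 0))
          = 2 * mvA M p j := by
        simp only [mvA, Finset.mul_sum]
        apply Finset.sum_congr rfl
        intro i _
        split <;> ring
      rw [hsplit, h2A] at hcap
      linarith
    calc (∑ i, p i * (if MVBad M p i j then
          M.d j i * (mcost M p j - mcost M p i) / (mcost M p j) ^ 2 else 0))
        ≤ ∑ i, (p i * (if MVBad M p i j then M.d j i else 0)) / mcost M p j :=
          Finset.sum_le_sum fun i _ => pstep i
      _ = (∑ i, p i * (if MVBad M p i j then M.d j i else 0)) / mcost M p j := by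
          rw [Finset.sum_div]
      _ ≤ (mcost M p j - 2 * mvA M p j) / mcost M p j := by
          exact (div_le_div_iff_of_pos_right hcj).mpr hnum
      _ = 1 - 2 * (mvA M p j / mcost M p j) := by
          rw [sub_div, div_self hcj.ne']
          ring
  calc mvT M p = ∑ j, p j * ∑ i, p i * (if MVBad M p i j then
        M.d j i * (mcost M p j - mcost M p i) / (mcost M p j) ^ 2 else 0) := by
        simp only [mvT, Finset.mul_sum]
    _ ≤ ∑ j, p j * (1 - 2 * (mvA M p j / mcost M p j)) :=
        Finset.sum_le_sum fun j _ => mul_le_mul_of_nonneg_left (inner_le j) (hp j)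
    _ = (∑ j, p j) - ∑ j, p j * (2 * (mvA M p j / mcost M p j)) := by
        rw [← Finset.sum_sub_distrib]
        exact Finset.sum_congr rfl fun j _ => by ring
    _ = 1 - 2 * ∑ j, p j * (mvA M p j / mcost M p j) := by
        rw [hpsum]
        congr 1
        rw [Finset.mul_sum]
        exact Finset.sum_congr rfl fun j _ => by ring

lemma mv_T_ge (M : FinMetric n) (p : Fin n → ℝ) (hp : ∀ i, 0 ≤ p i)
    (hpsum : ∑ i, p i = 1) (hpos : ∀ i, 0 < mcost M p i) :
    (∑ i, p i * (2 * (mvA M p i / mcost M p i)) ^ 2) ≤ 18 * mvT M p := by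
  have hswap : mvT M p = ∑ i, ∑ j, p j * (p i * (if MVBad M p i j then
      M.d j i * (mcost M p j - mcost M p i) / (mcost M p j) ^ 2 else 0)) := by
    exact Finset.sum_comm
  have inner_ge : ∀ i : Fin n,
      (2 / (9 * (mcost M p i) ^ 2)) * (mvA M p i) ^ 2
      ≤ ∑ j, p j * (if MVBad M p i j then
          M.d j i * (mcost M p j - mcost M p i) / (mcost M p j) ^ 2 else 0) := by
    intro i
    have hci := hpos i
    have pstep : ∀ j : Fin n, (2 / (9 * (mcost M p i) ^ 2))
        * (p j * (if MVBad M p i j then (mcost M p j - mcost M p i) ^ 2 else 0))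
        ≤ p j * (if MVBad M p i j then
          M.d j i * (mcost M p j - mcost M p i) / (mcost M p j) ^ 2 else 0) := by
      intro j
      by_cases h : MVBad M p i j
      · rw [if_pos h, if_pos h]
        have h2d : 2 * (mcost M p j - mcost M p i) ≤ M.d i j := mv_diff_le M p hp hpsum h.1
        have hsym : M.d j i = M.d i j := M.symm j i
        have h3 : mcost M p j ≤ 3 * mcost M p i := mv_cost3 M p hp hpsum h
        have hdnn : 0 ≤ mcost M p j - mcost M p i := by linarith [h.2]
        have hsq : (mcost M p j) ^ 2 ≤ 9 * (mcost M p i) ^ 2 := by nlinarith [hpos j, hci]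
        have key : 2 * (mcost M p j - mcost M p i) ^ 2 / (9 * (mcost M p i) ^ 2)
            ≤ M.d j i * (mcost M p j - mcost M p i) / (mcost M p j) ^ 2 := by
          apply div_le_div₀ (mul_nonneg (mv_d_nonneg M j i) hdnn) _ (pow_pos (hpos j) 2) hsq
          nlinarith [h2d, hdnn]
        calc (2 / (9 * (mcost M p i) ^ 2)) * (p j * (mcost M p j - mcost M p i) ^ 2)
            = p j * (2 * (mcost M p j - mcost M p i) ^ 2 / (9 * (mcost M p i) ^ 2)) := by
              ring
          _ ≤ p j * (M.d j i * (mcost M p j - mcost M p i) / (mcost M p j) ^ 2) :=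
              mul_le_mul_of_nonneg_left key (hp j)
      · rw [if_neg h, if_neg h]
        simp
    have hcs : (mvA M p i) ^ 2
        ≤ ∑ j, p j * (if MVBad M p i j then (mcost M p j - mcost M p i) ^ 2 else 0) := by
      set f : Fin n → ℝ := fun j => Real.sqrt (if MVBad M p i j then p j else 0) with hfdef
      have hfsq : ∀ j, f j ^ 2 = (if MVBad M p i j then p j else 0) := by
        intro j
        apply Real.sq_sqrt
        split
        · exact hp j
        · exact le_rfl
      have hcs0 := Finset.sum_mul_sq_le_sq_mul_sq Finset.univ f
        (fun j => f j * (mcost M p j - mcost M p i))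
      have hfg : ∀ j : Fin n, f j * (f j * (mcost M p j - mcost M p i))
          = p j * (if MVBad M p i j then mcost M p j - mcost M p i else 0) := by
        intro j
        have e : f j * (f j * (mcost M p j - mcost M p i))
            = f j ^ 2 * (mcost M p j - mcost M p i) := by ring
        rw [e, hfsq]
        split <;> ring
      have hg2 : ∀ j : Fin n, (f j * (mcost M p j - mcost M p i)) ^ 2
          = p j * (if MVBad M p i j then (mcost M p j - mcost M p i) ^ 2 else 0) := by
        intro j
        have e : (f j * (mcost M p j - mcost M p i)) ^ 2
            = f j ^ 2 * (mcost M p j - mcost M p i) ^ 2 := by ring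
        rw [e, hfsq]
        split <;> ring
      have hf2 : (∑ j, f j ^ 2) ≤ 1 := by
        calc (∑ j, f j ^ 2) = ∑ j, (if MVBad M p i j then p j else 0) :=
              Finset.sum_congr rfl fun j _ => hfsq j
          _ ≤ ∑ j, p j := Finset.sum_le_sum fun j _ => by
              split
              · exact le_rfl
              · exact hp j
          _ = 1 := hpsum
      calc (mvA M p i) ^ 2
          = (∑ j, f j * (f j * (mcost M p j - mcost M p i))) ^ 2 := by
            congr 1
            simp only [mvA]
            exact (Finset.sum_congr rfl fun j _ => hfg j).symm
        _ ≤ (∑ j, f j ^ 2) * ∑ j, (f j * (mcost M p j - mcost M p i)) ^ 2 := hcs0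
        _ ≤ 1 * ∑ j, (f j * (mcost M p j - mcost M p i)) ^ 2 :=
            mul_le_mul_of_nonneg_right hf2 (Finset.sum_nonneg fun j _ => sq_nonneg _)
        _ = ∑ j, p j * (if MVBad M p i j then (mcost M p j - mcost M p i) ^ 2 else 0) := by
            rw [one_mul]
            exact Finset.sum_congr rfl fun j _ => hg2 j
    calc (2 / (9 * (mcost M p i) ^ 2)) * (mvA M p i) ^ 2
        ≤ (2 / (9 * (mcost M p i) ^ 2))
          * ∑ j, p j * (if MVBad M p i j then (mcost M p j - mcost M p i) ^ 2 else 0) :=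
          mul_le_mul_of_nonneg_left hcs (by positivity)
      _ = ∑ j, (2 / (9 * (mcost M p i) ^ 2))
          * (p j * (if MVBad M p i j then (mcost M p j - mcost M p i) ^ 2 else 0)) := by
          rw [Finset.mul_sum]
      _ ≤ ∑ j, p j * (if MVBad M p i j then
          M.d j i * (mcost M p j - mcost M p i) / (mcost M p j) ^ 2 else 0) :=
          Finset.sum_le_sum fun j _ => pstep j
  calc (∑ i, p i * (2 * (mvA M p i / mcost M p i)) ^ 2)
      = ∑ i, 18 * (p i * ((2 / (9 * (mcost M p i) ^ 2)) * (mvA M p i) ^ 2)) := by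
        apply Finset.sum_congr rfl
        intro i _
        have hc := (hpos i).ne'
        field_simp
        ring
    _ ≤ ∑ i, 18 * (p i * ∑ j, p j * (if MVBad M p i j then
        M.d j i * (mcost M p j - mcost M p i) / (mcost M p j) ^ 2 else 0)) := by
        apply Finset.sum_le_sum
        intro i _
        have h := mul_le_mul_of_nonneg_left (inner_ge i) (hp i)
        linarith
    _ = 18 * mvT M p := by
        rw [hswap, Finset.mul_sum]
        apply Finset.sum_congr rfl
        intro i _
        rw [Finset.mul_sum, Finset.mul_sum, Finset.mul_sum]
        exact Finset.sum_congr rfl fun j _ => by ring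

lemma mv_cs (p W : Fin n → ℝ) (hp : ∀ i, 0 ≤ p i) :
    (∑ i, p i * W i) ^ 2 ≤ (∑ i, p i) * ∑ i, p i * W i ^ 2 := by
  have h := Finset.sum_mul_sq_le_sq_mul_sq Finset.univ (fun i => Real.sqrt (p i))
    (fun i => Real.sqrt (p i) * W i)
  have h1 : ∀ i : Fin n, Real.sqrt (p i) * (Real.sqrt (p i) * W i) = p i * W i := by
    intro i
    rw [← mul_assoc, Real.mul_self_sqrt (hp i)]
  have h2 : ∀ i : Fin n, (Real.sqrt (p i)) ^ 2 = p i := fun i => Real.sq_sqrt (hp i)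
  have h3 : ∀ i : Fin n, (Real.sqrt (p i) * W i) ^ 2 = p i * W i ^ 2 := by
    intro i
    rw [mul_pow, h2]
  calc (∑ i, p i * W i) ^ 2
      = (∑ i, Real.sqrt (p i) * (Real.sqrt (p i) * W i)) ^ 2 := by
        congr 1
        exact (Finset.sum_congr rfl fun i _ => h1 i).symm
    _ ≤ (∑ i, (Real.sqrt (p i)) ^ 2) * ∑ i, (Real.sqrt (p i) * W i) ^ 2 := h
    _ = (∑ i, p i) * ∑ i, p i * W i ^ 2 := by
        rw [Finset.sum_congr rfl fun i _ => h2 i, Finset.sum_congr rfl fun i _ => h3 i]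

end MVHelp

/-- for every finite metric voting instance in general position
whose candidate distribution equals its voter distribution, the expected
distortion is at most `2 - 1/652`. -/
theorem metric_identical_distortion_le (n : ℕ) (M : FinMetric n) (p : Fin n → ℝ)
    (hp : ∀ i, 0 ≤ p i) (hpsum : ∑ i, p i = 1)
    (hgen : MGenPos M p) :
    msocial M p p ≤ 2 - 1/652 := by
  classical
  by_cases hex : ∃ k l : Fin n, k ≠ l ∧ 0 < p k ∧ 0 < p l
  · obtain ⟨k, l, hkl, hk, hl⟩ := hex
    have hpos : ∀ i, 0 < mcost M p i := mv_mcost_pos M hp hkl hk hl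
    have hsoc := mv_social_le M p hp hpsum hgen hpos
    have hTle := mv_T_le M p hp hpsum hpos
    have hTge := mv_T_ge M p hp hpsum hpos
    set x := 2 * ∑ i, p i * (mvA M p i / mcost M p i) with hxdef
    have hxnn : 0 ≤ x := by
      apply mul_nonneg (by norm_num)
      apply Finset.sum_nonneg
      intro i _
      exact mul_nonneg (hp i) (div_nonneg (mvA_nonneg M p hp i) (hpos i).le)
    have hx1 := mv_cs p (fun i => 2 * (mvA M p i / mcost M p i)) hp
    have hxeq : (∑ i, p i * (2 * (mvA M p i / mcost M p i))) = x := by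
      rw [hxdef, Finset.mul_sum]
      exact Finset.sum_congr rfl fun i _ => by ring
    rw [hxeq, hpsum, one_mul] at hx1
    have hq : x ^ 2 ≤ 18 * (1 - x) := by
      calc x ^ 2 ≤ ∑ i, p i * (2 * (mvA M p i / mcost M p i)) ^ 2 := hx1
        _ ≤ 18 * mvT M p := hTge
        _ ≤ 18 * (1 - x) := by linarith
    have hxle : x ≤ 651/652 := by nlinarith
    calc msocial M p p ≤ 1 + x := hsoc
      _ ≤ 1 + 651/652 := by linarith
      _ ≤ 2 - 1/652 := by norm_num
  · push_neg at hex
    have hsoc0 : msocial M p p = 0 := by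
      simp only [msocial]
      apply Finset.sum_eq_zero
      intro i _
      apply Finset.sum_eq_zero
      intro j _
      rcases (hp i).eq_or_lt with h0 | hpi
      · rw [← h0]; ring
      rcases (hp j).eq_or_lt with h0 | hpj
      · rw [← h0]; ring
      have hij : i = j := by
        by_contra hne
        exact absurd hpj (not_lt.mpr (hex i j hne hpi))
      subst hij
      have hc0 : mcost M p i = 0 := by
        apply Finset.sum_eq_zero
        intro w _
        rcases eq_or_ne w i with rfl | hw
        · rw [M.refl]; ring
        · have h1 : p w ≤ 0 := hex i w (Ne.symm hw) hpi
          have h2 : p w = 0 := le_antisymm h1 (hp w)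
          rw [h2]; ring
      have hopt : mopt M p i i = i := by simp [mopt]
      simp only [mr, hopt, hc0, div_zero, mul_zero]
    rw [hsoc0]
    norm_num
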